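/- Let A be a complex unital Banach algebra, a, b ∈ A both having generalized Drazin inverses, and λ ≠ 0 a complex number. If ab = λ a^π b a b^π (where a^π = 1 − a a^d, b^π = 1 − b b^d are the spectral idempotents), then a + b has a generalized Drazin inverse. -/

import Mathlib

variable {𝔸 : Type*} [NormedRing 𝔸] [NormedAlgebra ℂ 𝔸] [CompleteSpace 𝔸]

/-- Quasinilpotent: spectral radius zero. -/
def IsQuasinilpotent (a : 𝔸) : Prop := spectralRadius ℂ a = 0

/-- `b` is a g-Drazin inverse of `a`. -/
def IsGDrazinInverse (a b : 𝔸) : Prop :=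
  Commute a b ∧ b * a * b = b ∧ IsQuasinilpotent (a - a ^ 2 * b)

/-! The hypothesis is much stronger than it looks. Multiplying it by `a^d` on the left and by
`b^d` on the right gives `a a^d b = 0 = a b b^d`, hence `ab = λ ba`. Then `z = b a a^d` satisfies
`λ z = (a - a² a^d) z a^d`; since `w ↦ (a - a² a^d) w a^d` is a quasinilpotent operator on the
algebra, `z = 0`, and symmetrically `b b^d a = 0`. With these four orthogonality relations
`a^d + b^d` is a g-Drazin inverse of `a + b`, provided the sum of the quasinilpotent parts
`x = a - a² a^d` and `y = b - b² b^d` is quasinilpotent; and `xy = ab = λ ba = λ yx`.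

For quasinilpotent `x, y` with `xy = λ yx` and `|λ| ≤ 1`, the inverses `(1 - λᵏ x)⁻¹` are bounded
uniformly in `k` (continuity on the compact unit disc), and `(1 - λᵏ x) y = y (1 - λᵏ⁺¹ x)`.
So `(y (1 - λx)⁻¹)ⁿ` is `yⁿ` times a product of `n` such inverses, which makes `y (1 - λx)⁻¹`
quasinilpotent, and `1 - (x + y) = (1 - x)(1 - y (1 - λx)⁻¹)` is invertible. -/

open Filter ENNReal
open scoped NNReal

theorem Ring.inverse_mul_eq_mul_inverse {M₀ : Type*} [MonoidWithZero M₀] {a b y : M₀}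
    (ha : IsUnit a) (hb : IsUnit b) (h : a * y = y * b) : Ring.inverse a * y = y * Ring.inverse b :=
  calc Ring.inverse a * y = Ring.inverse a * y * (b * Ring.inverse b) := by
        rw [Ring.mul_inverse_cancel b hb, mul_one]
    _ = Ring.inverse a * (a * y) * Ring.inverse b := by simp only [h, mul_assoc]
    _ = y * Ring.inverse b := by rw [← mul_assoc, Ring.inverse_mul_cancel a ha, one_mul]

theorem mul_pow_eq_pow_mul_of_mul_eq_mul {R : Type*} [Monoid R] {u : ℕ → R} {y : R}
    (h : ∀ k, u k * y = y * u (k + 1)) (n k : ℕ) : u k * y ^ n = y ^ n * u (k + n) := by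
  induction n generalizing k with
  | zero => simp
  | succ n ih =>
    rw [pow_succ', ← mul_assoc, h, mul_assoc, ih, ← mul_assoc, ← add_assoc, add_right_comm]

theorem sub_sq_mul_mul_sub_sq_mul {R : Type*} [Ring R] {a ad b bd : R} (hb : Commute b bd)
    (hpb : a * ad * b = 0) (haq : a * (b * bd) = 0) :
    (a - a ^ 2 * ad) * (b - b ^ 2 * bd) = a * b := by
  have hb2 : b ^ 2 * bd = b * bd * b := by rw [sq, mul_assoc, mul_assoc, hb.eq]
  calc (a - a ^ 2 * ad) * (b - b ^ 2 * bd)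
      = a * b - a * (b * bd) * b - a * (a * ad * b) + a * (a * ad * b) * (bd * b) := by
        rw [hb2]; noncomm_ring
    _ = a * b := by rw [haq, hpb]; simp

theorem ContinuousLinearMap.mulLeftRight_pow {𝕜 R : Type*} [NontriviallyNormedField 𝕜]
    [NormedRing R] [NormedAlgebra 𝕜 R] (c d : R) (n : ℕ) :
    mulLeftRight 𝕜 R c d ^ n = mulLeftRight 𝕜 R (c ^ n) (d ^ n) := by
  induction n with
  | zero => ext; simp
  | succ n ih =>
    ext z
    rw [pow_succ, mul_apply_eq_comp, ih]
    simp only [mulLeftRight_apply, pow_succ c, pow_succ' d, mul_assoc]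

section Quasinilpotent

variable {A B : Type*} [NormedRing A] [NormedAlgebra ℂ A] [NormedRing B] [NormedAlgebra ℂ B]

theorem spectralRadius_le_mul_of_nnnorm_pow_le [CompleteSpace A] [CompleteSpace B] {x : A} {y : B}
    {M : ℝ≥0} (h : ∀ n ≠ 0, ‖x ^ n‖₊ ≤ ‖y ^ n‖₊ * M ^ n) :
    spectralRadius ℂ x ≤ spectralRadius ℂ y * M := by
  refine le_of_tendsto_of_tendsto (spectrum.pow_nnnorm_pow_one_div_tendsto_nhds_spectralRadius x)
    (ENNReal.Tendsto.mul_const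
      (spectrum.pow_nnnorm_pow_one_div_tendsto_nhds_spectralRadius y) (.inr coe_ne_top))
    ?_
  filter_upwards [eventually_ne_atTop 0] with n hn
  calc (‖x ^ n‖₊ : ℝ≥0∞) ^ (1 / n : ℝ)
      ≤ ((‖y ^ n‖₊ : ℝ≥0∞) * (M : ℝ≥0∞) ^ n) ^ (1 / n : ℝ) := by
        gcongr
        exact_mod_cast h n hn
    _ = (‖y ^ n‖₊ : ℝ≥0∞) ^ (1 / n : ℝ) * M := by
        rw [mul_rpow_of_nonneg _ _ (by positivity), one_div, pow_rpow_inv_natCast hn]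

theorem IsQuasinilpotent.of_nnnorm_pow_le [CompleteSpace A] [CompleteSpace B] {x : A} {y : B}
    (hy : IsQuasinilpotent y) (M : ℝ≥0) (h : ∀ n ≠ 0, ‖x ^ n‖₊ ≤ ‖y ^ n‖₊ * M ^ n) :
    IsQuasinilpotent x :=
  le_antisymm ((spectralRadius_le_mul_of_nnnorm_pow_le h).trans_eq (by rw [hy, zero_mul]))
    zero_le

theorem isQuasinilpotent_iff_forall_isUnit_one_sub_smul {x : A} :
    IsQuasinilpotent x ↔ ∀ μ : ℂ, IsUnit (1 - μ • x) := by
  refine ⟨fun hx μ => spectrum.isUnit_one_sub_smul_of_lt_inv_radius ?_, fun h => ?_⟩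
  · rw [show spectralRadius ℂ x = 0 from hx, ENNReal.inv_zero]
    exact coe_lt_top
  · refine le_antisymm (iSup₂_le fun μ hμ => ?_) zero_le
    by_contra hne
    have hμ0 : μ ≠ 0 := by rintro rfl; simp at hne
    refine spectrum.mem_iff.mp hμ ?_
    have := (IsUnit.smul_sub_iff_sub_inv_smul (Units.mk0 μ hμ0) x).mpr
      (by simpa [Units.smul_def] using h μ⁻¹)
    simpa [Algebra.algebraMap_eq_smul_one] using this

theorem IsQuasinilpotent.smul {x : A} (hx : IsQuasinilpotent x) (c : ℂ) :
    IsQuasinilpotent (c • x) :=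
  isQuasinilpotent_iff_forall_isUnit_one_sub_smul.mpr fun μ => by
    simpa [smul_smul] using isQuasinilpotent_iff_forall_isUnit_one_sub_smul.mp hx (μ * c)

theorem IsQuasinilpotent.isUnit_one_sub {x : A} (hx : IsQuasinilpotent x) : IsUnit (1 - x) := by
  simpa using isQuasinilpotent_iff_forall_isUnit_one_sub_smul.mp hx 1

theorem IsQuasinilpotent.exists_nnnorm_inverse_one_sub_smul_le [CompleteSpace A] {x : A}
    (hx : IsQuasinilpotent x) :
    ∃ C : ℝ≥0, ∀ μ : ℂ, ‖μ‖ ≤ 1 → ‖Ring.inverse (1 - μ • x)‖₊ ≤ C := by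
  have hcont : Continuous fun μ : ℂ => Ring.inverse (1 - μ • x) :=
    continuous_iff_continuousAt.mpr fun μ =>
      (NormedRing.inverse_continuousAt
        (isQuasinilpotent_iff_forall_isUnit_one_sub_smul.mp hx μ).unit).comp
        (f := fun μ : ℂ => 1 - μ • x) (by fun_prop)
  obtain ⟨C, hC⟩ :=
    (isCompact_closedBall (0 : ℂ) 1).exists_bound_of_continuousOn hcont.continuousOn
  exact ⟨C.toNNReal, fun μ hμ => by
    simpa [← NNReal.coe_le_coe] using (hC μ (by simpa using hμ)).trans (le_max_left C 0)⟩

theorem IsQuasinilpotent.mulLeftRight_left [CompleteSpace A] {c : A} (hc : IsQuasinilpotent c)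
    (d : A) : IsQuasinilpotent (ContinuousLinearMap.mulLeftRight ℂ A c d) :=
  hc.of_nnnorm_pow_le ‖d‖₊ fun n hn => by
    rw [ContinuousLinearMap.mulLeftRight_pow]
    refine (?_ : _ ≤ ‖c ^ n‖₊ * ‖d ^ n‖₊).trans
      (by gcongr; exact nnnorm_pow_le' d (Nat.pos_of_ne_zero hn))
    exact ContinuousLinearMap.opNorm_mulLeftRight_apply_apply_le ℂ A _ _

theorem IsQuasinilpotent.mulLeftRight_right [CompleteSpace A] {d : A} (hd : IsQuasinilpotent d)
    (c : A) : IsQuasinilpotent (ContinuousLinearMap.mulLeftRight ℂ A c d) :=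
  hd.of_nnnorm_pow_le ‖c‖₊ fun n hn => by
    rw [ContinuousLinearMap.mulLeftRight_pow, mul_comm]
    refine (?_ : _ ≤ ‖c ^ n‖₊ * ‖d ^ n‖₊).trans
      (by gcongr; exact nnnorm_pow_le' c (Nat.pos_of_ne_zero hn))
    exact ContinuousLinearMap.opNorm_mulLeftRight_apply_apply_le ℂ A _ _

theorem eq_zero_of_smul_eq_mul_mul {c d z : A} {lam : ℂ} (hlam : lam ≠ 0)
    (hT : IsQuasinilpotent (ContinuousLinearMap.mulLeftRight ℂ A c d))
    (h : lam • z = c * z * d) : z = 0 := by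
  obtain ⟨u, hu⟩ := hT.smul lam⁻¹ |>.isUnit_one_sub
  have : (u : A →L[ℂ] A) z = 0 := by
    rw [hu, sub_apply, smul_apply, ContinuousLinearMap.mulLeftRight_apply, ← h,
      inv_smul_smul₀ hlam, one_apply_eq_self, sub_self]
  simpa [← mul_apply_eq_comp] using congr_arg (↑u⁻¹ : A →L[ℂ] A) this

theorem isUnit_one_sub_add_of_mul_eq_smul_mul [CompleteSpace A] {x y : A} {lam : ℂ}
    (hlam : ‖lam‖ ≤ 1) (hx : IsQuasinilpotent x) (hy : IsQuasinilpotent y)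
    (h : x * y = lam • (y * x)) : IsUnit (1 - (x + y)) := by
  obtain ⟨C, hC⟩ := hx.exists_nnnorm_inverse_one_sub_smul_le
  set u : ℕ → A := fun k => Ring.inverse (1 - lam ^ k • x)
  have hunit (k : ℕ) : IsUnit (1 - lam ^ k • x) := (hx.smul _).isUnit_one_sub
  have hshift (k : ℕ) : (1 - lam ^ k • x) * y = y * (1 - lam ^ (k + 1) • x) := by
    rw [sub_mul, mul_sub, smul_mul_assoc, h, smul_smul, ← pow_succ, one_mul, mul_one,
      mul_smul_comm]
  have hu (k : ℕ) : u k * y = y * u (k + 1) :=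
    Ring.inverse_mul_eq_mul_inverse (hunit k) (hunit (k + 1)) (hshift k)
  have hCu (k : ℕ) : ‖u k‖₊ ≤ C :=
    hC _ (by rw [norm_pow]; exact pow_le_one₀ (norm_nonneg _) hlam)
  have hpow (n : ℕ) :
      ∃ R : A, (y * u 1) ^ (n + 1) = y ^ (n + 1) * R ∧ ‖R‖₊ ≤ C ^ (n + 1) := by
    induction n with
    | zero => exact ⟨u 1, by simp, by simpa using hCu 1⟩
    | succ n ih =>
      obtain ⟨R, hR, hRC⟩ := ih
      refine ⟨u (1 + (n + 1)) * R, ?_, ?_⟩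
      · rw [pow_succ' _ (n + 1), hR, mul_assoc, ← mul_assoc (u 1),
          mul_pow_eq_pow_mul_of_mul_eq_mul hu, pow_succ' y (n + 1), mul_assoc, mul_assoc]
      · rw [pow_succ']
        exact (nnnorm_mul_le _ _).trans (by gcongr; exact hCu _)
  have hz : IsQuasinilpotent (y * u 1) := hy.of_nnnorm_pow_le C fun n hn => by
    obtain ⟨m, rfl⟩ := Nat.exists_eq_succ_of_ne_zero hn
    obtain ⟨R, hR, hRC⟩ := hpow m
    rw [hR]
    exact (nnnorm_mul_le _ _).trans (by gcongr)
  have hfactor : 1 - (x + y) = (1 - x) * (1 - y * u 1) := by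
    have : (1 - x) * (y * u 1) = y := by
      have h0 := hshift 0
      rw [pow_zero, one_smul, zero_add] at h0
      rw [← mul_assoc, h0, mul_assoc, Ring.mul_inverse_cancel _ (hunit 1), mul_one]
    rw [mul_sub, this, mul_one]
    abel
  rw [hfactor]
  exact hx.isUnit_one_sub.mul hz.isUnit_one_sub

theorem IsQuasinilpotent.add_of_mul_eq_smul_mul [CompleteSpace A] {x y : A} {lam : ℂ}
    (hlam : lam ≠ 0) (hx : IsQuasinilpotent x) (hy : IsQuasinilpotent y)
    (h : x * y = lam • (y * x)) : IsQuasinilpotent (x + y) := by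
  wlog hle : ‖lam‖ ≤ 1 generalizing x y lam
  · rw [add_comm]
    refine this (inv_ne_zero hlam) hy hx (by rw [h, inv_smul_smul₀ hlam]) ?_
    rw [norm_inv]
    exact inv_le_one_of_one_le₀ (not_le.mp hle).le
  refine isQuasinilpotent_iff_forall_isUnit_one_sub_smul.mpr fun μ => ?_
  rw [smul_add]
  refine isUnit_one_sub_add_of_mul_eq_smul_mul hle (hx.smul μ) (hy.smul μ) ?_
  rw [smul_mul_smul_comm, h, smul_mul_smul_comm, smul_comm]

end Quasinilpotent

section GDrazin

variable {A : Type*} [NormedRing A] [NormedAlgebra ℂ A] {a ad b bd : A} {lam : ℂ}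

namespace IsGDrazinInverse

theorem mul_inv_mul_inv (h : IsGDrazinInverse a ad) : a * ad * ad = ad := by
  rw [h.1.eq]; exact h.2.1

theorem inv_mul_one_sub (h : IsGDrazinInverse a ad) : ad * (1 - a * ad) = 0 := by
  rw [mul_sub, mul_one, ← mul_assoc, h.2.1, sub_self]

theorem one_sub_mul_inv (h : IsGDrazinInverse a ad) : (1 - a * ad) * ad = 0 := by
  rw [sub_mul, one_mul, h.mul_inv_mul_inv, sub_self]

theorem inv_mul_eq_zero {c : A} (h : IsGDrazinInverse a ad) (hc : a * ad * c = 0) :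
    ad * c = 0 := by
  rw [← h.2.1, mul_assoc ad a ad, mul_assoc, hc, mul_zero]

theorem mul_inv_eq_zero {c : A} (h : IsGDrazinInverse a ad) (hc : c * (a * ad) = 0) :
    c * ad = 0 := by
  rw [← h.mul_inv_mul_inv, ← mul_assoc, hc, zero_mul]

theorem mul_inv_mul_eq_zero_of_mul_eq {c : A} (ha : IsGDrazinInverse a ad)
    (hab : a * b = lam • ((1 - a * ad) * c)) : a * ad * b = 0 := by
  rw [ha.1.eq, mul_assoc, hab, mul_smul_comm, ← mul_assoc, ha.inv_mul_one_sub, zero_mul,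
    smul_zero]

theorem mul_mul_inv_eq_zero_of_mul_eq {c : A} (hb : IsGDrazinInverse b bd)
    (hab : a * b = lam • (c * (1 - b * bd))) : a * (b * bd) = 0 := by
  rw [← mul_assoc, hab, smul_mul_assoc, mul_assoc, hb.one_sub_mul_inv, mul_zero, smul_zero]

theorem mul_mul_inv_eq_zero_of_mul_eq_smul_mul [CompleteSpace A] (ha : IsGDrazinInverse a ad)
    (hlam : lam ≠ 0) (hab : a * b = lam • (b * a)) (hpb : a * ad * b = 0) :
    b * (a * ad) = 0 := by
  refine eq_zero_of_smul_eq_mul_mul hlam (ha.2.2.mulLeftRight_left ad) ?_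
  calc lam • (b * (a * ad)) = a * b * ad := by rw [hab, smul_mul_assoc, mul_assoc]
    _ = a * b * (a * ad * ad) - a * (a * ad * b) * (a * ad * ad) := by
        rw [hpb, ha.mul_inv_mul_inv]; simp
    _ = (a - a ^ 2 * ad) * (b * (a * ad)) * ad := by noncomm_ring

theorem mul_inv_mul_eq_zero_of_mul_eq_smul_mul [CompleteSpace A] (hb : IsGDrazinInverse b bd)
    (hlam : lam ≠ 0) (hab : a * b = lam • (b * a)) (haq : a * (b * bd) = 0) :
    b * bd * a = 0 := by
  refine eq_zero_of_smul_eq_mul_mul hlam (hb.2.2.mulLeftRight_right bd) ?_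
  have hb2 : b ^ 2 * bd = b * bd * b := by rw [sq, mul_assoc, mul_assoc, hb.1.eq]
  calc lam • (b * bd * a) = bd * (a * b) := by rw [hab, mul_smul_comm, ← mul_assoc, hb.1.eq]
    _ = (bd * b * bd) * (a * b) - (bd * b * bd) * (a * (b * bd)) * b := by
        rw [haq, hb.2.1]; simp
    _ = bd * (b * bd * a) * (b - b ^ 2 * bd) := by rw [hb2]; noncomm_ring

theorem add (ha : IsGDrazinInverse a ad) (hb : IsGDrazinInverse b bd) (hpb : a * ad * b = 0)
    (hbp : b * (a * ad) = 0) (haq : a * (b * bd) = 0) (hqa : b * bd * a = 0)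
    (hq : IsQuasinilpotent (a - a ^ 2 * ad + (b - b ^ 2 * bd))) :
    IsGDrazinInverse (a + b) (ad + bd) := by
  have hleft : (a + b) * (ad + bd) = a * ad + b * bd := by
    simp only [add_mul, mul_add, ha.mul_inv_eq_zero hbp, hb.mul_inv_eq_zero haq, add_zero,
      zero_add]
  have hright : (ad + bd) * (a + b) = a * ad + b * bd := by
    simp only [add_mul, mul_add, ha.inv_mul_eq_zero hpb, hb.inv_mul_eq_zero hqa, add_zero,
      zero_add, ha.1.eq, hb.1.eq]
  refine ⟨hleft.trans hright.symm, ?_, ?_⟩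
  · have hadbd : a * ad * bd = 0 := by
      rw [← hb.mul_inv_mul_inv, ← mul_assoc, ← mul_assoc, hpb, zero_mul, zero_mul]
    have hbdad : b * bd * ad = 0 := by
      rw [← ha.mul_inv_mul_inv, ← mul_assoc, ← mul_assoc, hqa, zero_mul, zero_mul]
    rw [hright, add_mul, mul_add, mul_add, ha.mul_inv_mul_inv, hb.mul_inv_mul_inv, hadbd, hbdad,
      add_zero, zero_add]
  · convert hq using 1
    rw [sq, mul_assoc, hleft, mul_add, add_mul, add_mul, haq, hbp]
    noncomm_ring

end IsGDrazinInverse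

end GDrazin

/-- if `a, b` have g-Drazin inverses `ad, bd`, `λ ≠ 0` and
`a*b = λ • (aᵖ*b*a*bᵖ)` (spectral idempotents `aᵖ = 1 - a*ad`, `bᵖ = 1 - b*bd`),
then `a + b` has a g-Drazin inverse. -/
theorem gDrazin_add_exists (a b ad bd : 𝔸) (lam : ℂ) (hlam : lam ≠ 0)
    (ha : IsGDrazinInverse a ad) (hb : IsGDrazinInverse b bd)
    (hab : a * b = lam • ((1 - a * ad) * b * a * (1 - b * bd))) :
    ∃ m : 𝔸, IsGDrazinInverse (a + b) m := by
  have hpb : a * ad * b = 0 :=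
    ha.mul_inv_mul_eq_zero_of_mul_eq (lam := lam) (c := b * a * (1 - b * bd))
      (hab.trans (by simp only [mul_assoc]))
  have haq : a * (b * bd) = 0 := hb.mul_mul_inv_eq_zero_of_mul_eq hab
  have hcomm : a * b = lam • (b * a) := by
    have e1 : (1 - a * ad) * b = b := by rw [sub_mul, one_mul, hpb, sub_zero]
    have e2 : b * a * (1 - b * bd) = b * a := by
      rw [mul_sub, mul_one, mul_assoc b a, haq, mul_zero, sub_zero]
    rw [hab, e1, e2]
  have hbp := ha.mul_mul_inv_eq_zero_of_mul_eq_smul_mul hlam hcomm hpb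
  have hqa := hb.mul_inv_mul_eq_zero_of_mul_eq_smul_mul hlam hcomm haq
  refine ⟨ad + bd, ha.add hb hpb hbp haq hqa (ha.2.2.add_of_mul_eq_smul_mul hlam hb.2.2 ?_)⟩
  rw [sub_sq_mul_mul_sub_sq_mul hb.1 hpb haq, sub_sq_mul_mul_sub_sq_mul ha.1 hqa hbp, hcomm]
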